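/- Let k₁, k₁′ > 0 and M_max, M_max′ > 0, and suppose that for all M in some nonempty open interval contained in (0, min(M_max, M_max′)), k₁·(1 − exp(2.3·(M − M_max))) = k₁′·(1 − exp(2.3·(M − M_max′))). Then k₁ = k₁′ and M_max = M_max′. -/

import Mathlib

/-!
On the interval, `k * (1 - exp (c * (M - m))) = k + (-k * exp (-(c * m))) * exp (c * M)` is an
affine function of `exp (c * M)`, which takes two distinct values at two distinct points.
Comparing coefficients gives `k = k'` and `k * exp (-(c * m)) = k' * exp (-(c * m'))`; cancelling
`k ≠ 0` and using injectivity of `exp` gives `m = m'`.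
-/

open Real

lemma affine_coeffs_eq_of_eq_of_eq {p q p' q' s t : ℝ} (hst : s ≠ t)
    (hs : p + q * s = p' + q' * s) (ht : p + q * t = p' + q' * t) : p = p' ∧ q = q' := by
  have hq : q = q' := by
    have h : (q - q') * (s - t) = 0 := by linear_combination hs - ht
    simpa [sub_eq_zero, hst] using h
  subst hq
  exact ⟨by linarith, rfl⟩

lemma mul_one_sub_exp_mul_sub (k c M m : ℝ) :
    k * (1 - exp (c * (M - m))) = k + -(k * exp (-(c * m))) * exp (c * M) := by
  rw [show c * (M - m) = c * M + -(c * m) by ring, exp_add]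
  ring

theorem eq_and_eq_of_mul_one_sub_exp_eq {c k k' m m' x y : ℝ} (hc : c ≠ 0) (hk : k ≠ 0)
    (hxy : x ≠ y)
    (hx : k * (1 - exp (c * (x - m))) = k' * (1 - exp (c * (x - m'))))
    (hy : k * (1 - exp (c * (y - m))) = k' * (1 - exp (c * (y - m')))) :
    k = k' ∧ m = m' := by
  have hexp : exp (c * x) ≠ exp (c * y) := by
    simpa [exp_eq_exp, hc] using hxy
  simp only [mul_one_sub_exp_mul_sub] at hx hy
  obtain ⟨rfl, hcoeff⟩ := affine_coeffs_eq_of_eq_of_eq hexp hx hy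
  have hm : c * m = c * m' := by
    simpa [neg_inj, hk] using hcoeff
  exact ⟨rfl, mul_left_cancel₀ hc hm⟩

theorem vtt_identifiability_k1_Mmax_general (k1 k1' Mmax Mmax' a b : ℝ)
    (hk1 : 0 < k1)
    (hab : a < b)
    (heq : ∀ M ∈ Set.Ioo a b,
      k1 * (1 - Real.exp (2.3 * (M - Mmax))) = k1' * (1 - Real.exp (2.3 * (M - Mmax')))) :
    k1 = k1' ∧ Mmax = Mmax' := by
  obtain ⟨x, hax, hxb⟩ := exists_between hab
  obtain ⟨y, hxy, hyb⟩ := exists_between hxb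
  exact eq_and_eq_of_mul_one_sub_exp_eq (by norm_num) hk1.ne' hxy.ne
    (heq x ⟨hax, hxb⟩) (heq y ⟨hax.trans hxy, hyb⟩)

theorem vtt_identifiability_k1_Mmax (k1 k1' Mmax Mmax' a b : ℝ)
    (hk1 : 0 < k1) (hk1' : 0 < k1') (hMmax : 0 < Mmax) (hMmax' : 0 < Mmax')
    (hab : a < b) (hsub : Set.Ioo a b ⊆ Set.Ioo 0 (min Mmax Mmax'))
    (heq : ∀ M ∈ Set.Ioo a b,
      k1 * (1 - Real.exp (2.3 * (M - Mmax))) = k1' * (1 - Real.exp (2.3 * (M - Mmax')))) :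
    k1 = k1' ∧ Mmax = Mmax' :=
  vtt_identifiability_k1_Mmax_general k1 k1' Mmax Mmax' a b hk1 hab heq
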